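/- arXiv:2409.17736 — 2 statements merged into one kernel-verified Lean document; each statement's English description precedes it below -/
import Mathlib

section
/- Let ψ = ψ_c + ψ_e : ℝ^N → ℝ with ψ_c convex and differentiable and -ψ_e convex and differentiable, let M > 0, τ > 0, and let A be symmetric positive semidefinite. If c^{n+1} satisfies (1/(Mτ))(c^{n+1} - c^n) = -A(∇ψ_c(c^{n+1}) + ∇ψ_e(c^n)) and c^{n+1} - c^n lies in the range of A, then ψ(c^{n+1}) ≤ ψ(c^n). -/
/-!
Write `d = c^{n+1} - c^n` and `g = ∇ψ_c(c^{n+1}) + ∇ψ_e(c^n)`. The first-order characterisations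
of convexity (at `c^{n+1}`) and concavity (at `c^n`) bound the energy change by `⟪g, d⟫`, and the
scheme gives `d = -Mτ A g`, so `⟪g, d⟫ = -Mτ ⟪A g, g⟫ ≤ 0`.
-/

open scoped RealInnerProductSpace

section FirstOrderCondition

variable {E : Type*} [NormedAddCommGroup E] [NormedSpace ℝ E] {s : Set E} {f : E → ℝ}
  {f' : E →L[ℝ] ℝ} {x y : E}

theorem ConvexOn.sub_le_of_hasFDerivAt (hf : ConvexOn ℝ s f) (hx : x ∈ s) (hy : y ∈ s)
    (hf' : HasFDerivAt f f' x) : f x - f y ≤ f' (x - y) := by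
  set φ : ℝ → ℝ := f ∘ AffineMap.lineMap x y
  have hφ : ConvexOn ℝ (AffineMap.lineMap x y ⁻¹' s) φ := hf.comp_affineMap _
  have hφ' : HasDerivAt φ (f' (y - x)) 0 := by
    refine HasFDerivAt.comp_hasDerivAt (0 : ℝ) ?_ AffineMap.hasDerivAt_lineMap
    rwa [AffineMap.lineMap_apply_zero]
  have hslope := hφ.le_slope_of_hasDerivAt (by simpa using hx) (by simpa using hy) one_pos hφ'
  have hneg : f' (x - y) = -f' (y - x) := by rw [← map_neg, neg_sub]
  simp only [slope_def_field, φ, Function.comp_apply, AffineMap.lineMap_apply_zero,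
    AffineMap.lineMap_apply_one, sub_zero, div_one] at hslope
  linarith

theorem ConcaveOn.sub_le_of_hasFDerivAt (hf : ConcaveOn ℝ s f) (hx : x ∈ s) (hy : y ∈ s)
    (hf' : HasFDerivAt f f' y) : f x - f y ≤ f' (x - y) := by
  have h := (neg_convexOn_iff.mpr hf).sub_le_of_hasFDerivAt hy hx hf'.neg
  simp only [Pi.neg_apply, neg_apply, ← map_neg, neg_sub] at h
  linarith

end FirstOrderCondition

theorem inner_nonpos_of_smul_eq_neg_apply {E : Type*} [NormedAddCommGroup E]
    [InnerProductSpace ℝ E] {A : E →ₗ[ℝ] E} (hA : ∀ x, 0 ≤ ⟪A x, x⟫) {c : ℝ} (hc : 0 < c)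
    {d g : E} (h : c • d = -A g) : ⟪g, d⟫ ≤ 0 := by
  have : c * ⟪g, d⟫ = -⟪A g, g⟫ := by
    rw [← real_inner_smul_right, h, inner_neg_right, real_inner_comm]
  nlinarith [hA g]

theorem stmt_9_general (N : ℕ)
    (ψc ψe : EuclideanSpace ℝ (Fin N) → ℝ)
    (hψc_conv : ConvexOn ℝ Set.univ ψc) (hψc_diff : Differentiable ℝ ψc)
    (hψe_conc : ConvexOn ℝ Set.univ (fun x => -ψe x)) (hψe_diff : Differentiable ℝ ψe)
    (M τ : ℝ) (hM : 0 < M) (hτ : 0 < τ)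
    (A : EuclideanSpace ℝ (Fin N) →ₗ[ℝ] EuclideanSpace ℝ (Fin N))
    (hpsd : ∀ x, 0 ≤ ⟪A x, x⟫)
    (cn cn1 : EuclideanSpace ℝ (Fin N))
    (hscheme : (1 / (M * τ)) • (cn1 - cn) =
      -(A (gradient ψc cn1 + gradient ψe cn))) :
    ψc cn1 + ψe cn1 ≤ ψc cn + ψe cn := by
  have hc : ψc cn1 - ψc cn ≤ ⟪gradient ψc cn1, cn1 - cn⟫ := by
    rw [inner_gradient_left]
    exact hψc_conv.sub_le_of_hasFDerivAt trivial trivial (hψc_diff cn1).hasFDerivAt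
  have he : ψe cn1 - ψe cn ≤ ⟪gradient ψe cn, cn1 - cn⟫ := by
    rw [inner_gradient_left]
    exact (neg_convexOn_iff.mp hψe_conc).sub_le_of_hasFDerivAt trivial trivial
      (hψe_diff cn).hasFDerivAt
  have hdescent := inner_nonpos_of_smul_eq_neg_apply hpsd (by positivity) hscheme
  rw [inner_add_left] at hdescent
  linarith

/-- Gradient (energy) stability of the Eyre convex-splitting scheme:
if `ψ = ψ_c + ψ_e` with `ψ_c` convex differentiable and `-ψ_e` convex,
`ψ_e` differentiable, `M, τ > 0`, `A` symmetric positive semidefinite, and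
`(1/(Mτ))(c^{n+1} - c^n) = -A(∇ψ_c(c^{n+1}) + ∇ψ_e(c^n))` with
`c^{n+1} - c^n ∈ range A`, then `ψ(c^{n+1}) ≤ ψ(c^n)`. -/
theorem stmt_9 (N : ℕ)
    (ψc ψe : EuclideanSpace ℝ (Fin N) → ℝ)
    (hψc_conv : ConvexOn ℝ Set.univ ψc) (hψc_diff : Differentiable ℝ ψc)
    (hψe_conc : ConvexOn ℝ Set.univ (fun x => -ψe x)) (hψe_diff : Differentiable ℝ ψe)
    (M τ : ℝ) (hM : 0 < M) (hτ : 0 < τ)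
    (A : EuclideanSpace ℝ (Fin N) →ₗ[ℝ] EuclideanSpace ℝ (Fin N))
    (hsym : ∀ x y, ⟪A x, y⟫ = ⟪x, A y⟫)
    (hpsd : ∀ x, 0 ≤ ⟪A x, x⟫)
    (cn cn1 : EuclideanSpace ℝ (Fin N))
    (hscheme : (1 / (M * τ)) • (cn1 - cn) =
      -(A (gradient ψc cn1 + gradient ψe cn)))
    (hrange : cn1 - cn ∈ LinearMap.range A) :
    ψc cn1 + ψe cn1 ≤ ψc cn + ψe cn :=
  stmt_9_general N ψc ψe hψc_conv hψc_diff hψe_conc hψe_diff M τ hM hτ A hpsd cn cn1 hscheme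
end

section
/- Let a₁,...,a_p ≥ 0 and τ > 0, and define F_p = ∏_{m=1}^{p} (I - (1/(1+τa_m))(I + τÂ)) for a symmetric positive semidefinite matrix Â. Then F_p is a polynomial in Â, and consequently the LIM update c^{n+1} = (I - F_p²)(I + τÂ)^{-1} f̂ is computable using only matrix-vector products with Â (no linear system solves), i.e., (I - F_p²)(I + τÂ)^{-1} is a polynomial in Â. -/
open Matrix Polynomial

/-!
Every factor `1 - c (1 + τx)` of `F_p` is a polynomial in `x` taking the value `1` at the root
`x = -1/τ` of `1 + τx`. Hence `F_p(-1/τ) = 1`, so `1 - F_p(x)² = (1 + τx) r(x)` for a polynomial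
`r`, and since `1 + τÂ` is invertible (`Â` is positive semidefinite) and commutes with `r(Â)`,
`(1 - F_p(Â)²)(1 + τÂ)⁻¹ = r(Â)`.
-/

section Polynomial

variable {K : Type*} [Field K] {τ : K}

lemma eval_neg_inv_one_add_C_mul_X (hτ : τ ≠ 0) : (1 + C τ * X).eval (-τ⁻¹) = 0 := by
  simp [hτ]

lemma eval_neg_inv_prod_one_sub_C_mul_one_add_C_mul_X {ι : Type*} (hτ : τ ≠ 0) (l : List ι)
    (c : ι → K) : (l.map fun m => 1 - C (c m) * (1 + C τ * X)).prod.eval (-τ⁻¹) = 1 := by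
  rw [eval_list_prod, List.map_map]
  refine List.prod_eq_one fun y hy => ?_
  obtain ⟨m, -, rfl⟩ := List.mem_map.mp hy
  simp only [Function.comp_apply, eval_sub, eval_one, eval_mul, eval_C,
    eval_neg_inv_one_add_C_mul_X hτ, mul_zero, sub_zero]

lemma one_add_C_mul_X_dvd_one_sub_sq (hτ : τ ≠ 0) {g : K[X]} (hg : g.eval (-τ⁻¹) = 1) :
    1 + C τ * X ∣ 1 - g ^ 2 := by
  have hfactor : (1 + C τ * X : K[X]) = C τ * (X - C (-τ⁻¹)) := by
    rw [mul_sub, ← C_mul, mul_neg, mul_inv_cancel₀ hτ, C_neg, C_1]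
    ring
  rw [hfactor, (isUnit_C.mpr hτ.isUnit).mul_left_dvd, dvd_iff_isRoot]
  simp [hg]

end Polynomial

lemma Matrix.exists_aeval_mul_inv_eq_aeval_of_dvd {n R : Type*} [Fintype n] [DecidableEq n]
    [CommRing R] (A : Matrix n n R) {b f : R[X]} (hb : IsUnit (aeval A b)) (hbf : b ∣ f) :
    ∃ r : R[X], aeval A f * (aeval A b)⁻¹ = aeval A r := by
  obtain ⟨r, rfl⟩ := hbf
  refine ⟨r, ?_⟩
  rw [mul_comm b, map_mul, mul_nonsing_inv_cancel_right _ _ ((isUnit_iff_isUnit_det _).mp hb)]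

lemma Matrix.PosSemidef.posDef_one_add_smul {n : Type*} [Fintype n] [DecidableEq n]
    {A : Matrix n n ℝ} (hA : A.PosSemidef) {τ : ℝ} (hτ : 0 ≤ τ) : (1 + τ • A).PosDef :=
  PosDef.one.add_posSemidef (hA.smul hτ)

theorem stmt_16_general (N : ℕ) (p : ℕ) (a : ℕ → ℝ)
    (τ : ℝ) (hτ : 0 < τ)
    (Ahat : Matrix (Fin N) (Fin N) ℝ) (hA : Ahat.PosSemidef)
    (Fp : Matrix (Fin N) (Fin N) ℝ)
    (hFp : Fp = ((List.range p).map (fun m =>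
      (1 : Matrix (Fin N) (Fin N) ℝ) - (1 / (1 + τ * a m)) • (1 + τ • Ahat))).prod) :
    (∃ q : Polynomial ℝ, Fp = Polynomial.aeval Ahat q) ∧
    (∃ r : Polynomial ℝ,
      ((1 : Matrix (Fin N) (Fin N) ℝ) - Fp ^ 2) * (1 + τ • Ahat)⁻¹ =
        Polynomial.aeval Ahat r) := by
  set g : ℝ[X] := ((List.range p).map fun m => 1 - C (1 / (1 + τ * a m)) * (1 + C τ * X)).prod
  have hB : 1 + τ • Ahat = aeval Ahat (1 + C τ * X) := by simp [Algebra.smul_def]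
  have hFg : Fp = aeval Ahat g := by
    simp only [hFp, g, map_list_prod, List.map_map, Function.comp_def, map_sub, map_one, map_mul,
      aeval_C, ← hB, Algebra.smul_def]
  refine ⟨⟨g, hFg⟩, ?_⟩
  have hdvd : 1 + C τ * X ∣ 1 - g ^ 2 := one_add_C_mul_X_dvd_one_sub_sq hτ.ne'
    (eval_neg_inv_prod_one_sub_C_mul_one_add_C_mul_X hτ.ne' _ _)
  rw [hFg, hB, ← map_pow, ← map_one (aeval (R := ℝ) Ahat), ← map_sub]
  exact Ahat.exists_aeval_mul_inv_eq_aeval_of_dvd (hB ▸ (hA.posDef_one_add_smul hτ.le).isUnit) hdvd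

/-- With Chebyshev parameters `a₁ = 0, a₂, …, a_p ≥ 0`, `τ > 0` and a symmetric
positive semidefinite matrix `Â`, the operator
`F_p = ∏_{m=1}^p (I - (1/(1+τ a_m))(I + τÂ))` is a polynomial in `Â`, and the
LIM update operator `(I - F_p²)(I + τÂ)⁻¹` is also a polynomial in `Â`
(hence computable with matrix-vector products only, no linear system solves). -/
theorem stmt_16 (N : ℕ) (p : ℕ) (hp : 1 ≤ p) (a : ℕ → ℝ)
    (ha : ∀ m, 0 ≤ a m) (ha1 : a 0 = 0)
    (τ : ℝ) (hτ : 0 < τ)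
    (Ahat : Matrix (Fin N) (Fin N) ℝ) (hA : Ahat.PosSemidef)
    (Fp : Matrix (Fin N) (Fin N) ℝ)
    (hFp : Fp = ((List.range p).map (fun m =>
      (1 : Matrix (Fin N) (Fin N) ℝ) - (1 / (1 + τ * a m)) • (1 + τ • Ahat))).prod) :
    (∃ q : Polynomial ℝ, Fp = Polynomial.aeval Ahat q) ∧
    (∃ r : Polynomial ℝ,
      ((1 : Matrix (Fin N) (Fin N) ℝ) - Fp ^ 2) * (1 + τ • Ahat)⁻¹ =
        Polynomial.aeval Ahat r) :=
  stmt_16_general N p a τ hτ Ahat hA Fp hFp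
end
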